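/- Let N ≥ 2, n ≥ 1, and let χ⁽¹⁾,…,χ⁽ⁿ⁾ be the vanishing-order sequences of n nonzero partitions of N. Then the nodal sequence χ_k := max(1, ∑_{i=1}^{n} χ⁽ⁱ⁾_k − (n−1)k), k ∈ {1,…,N}, is the vanishing-order sequence of some partition of N. -/

import Mathlib

/-- `p` (with parts indexed from 1) is a partition of `N`: the parts are
nonincreasing, sum to `N`, and vanish beyond index `N`. -/
def IsPartitionOf (N : ℕ) (p : ℕ → ℕ) : Prop :=
  (∀ i, 1 ≤ i → p (i + 1) ≤ p i) ∧
  (∑ j ∈ Finset.Icc 1 N, p j = N) ∧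
  (∀ i, N < i → p i = 0)

/-- The vanishing order at `k` of the partition `p`: the least positive
integer `i` such that `p 1 + ⋯ + p i ≥ k`. -/
noncomputable def chiOf (p : ℕ → ℕ) (k : ℕ) : ℕ :=
  sInf {i | 1 ≤ i ∧ k ≤ ∑ j ∈ Finset.Icc 1 i, p j}

/-- `χ` is the vanishing-order sequence, on `{1,…,N}`, of the partition `p` of `N`. -/
def IsVanishingOrderSeq (N : ℕ) (p : ℕ → ℕ) (χ : ℕ → ℕ) : Prop :=
  IsPartitionOf N p ∧ ∀ k, 1 ≤ k → k ≤ N → χ k = chiOf p k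

/-!
A nondecreasing `X : ℕ → ℕ` on `{1,…,N}` with values in `[1, N]` is the vanishing-order sequence
of its level counts `v ↦ #{k | X k = v}` as soon as these are nonincreasing in `v`.

For the nodal sequence `X = max 1 F`, `F k = ∑ᵢ χ⁽ⁱ⁾_k - (n-1)k`, every `χ⁽ⁱ⁾` grows by `0` or `1`
per step, and while `F ≥ 2` at most one of them can stall; so `X` is nondecreasing. Where `X`
passes from level `v` to `v + 1`, `F` grows by one, so every `χ⁽ⁱ⁾` steps and the level boundary
is a boundary between parts of every partition. Let `(A, B]` and `(B, C]` be the level sets of `v`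
and `v + 1`, and let `r_i`, `t_i` be the numbers of parts of `p⁽ⁱ⁾` they span. Comparing these
parts with the part of `p⁽ⁱ⁾` at the boundary `B` gives `r_i (C - B) ≤ t_i (B - A)`, and summing
with `∑ r_i = 1 + (n-1)(B - A)`, `∑ t_i ≤ 1 + (n-1)(C - B)` yields `C - B ≤ B - A`.
-/

open Finset

def partialSum (p : ℕ → ℕ) (m : ℕ) : ℕ := ∑ j ∈ Icc 1 m, p j

section PartialSum

variable {p : ℕ → ℕ}

lemma partialSum_zero : partialSum p 0 = 0 := rfl

lemma partialSum_succ (m : ℕ) : partialSum p (m + 1) = partialSum p m + p (m + 1) :=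
  sum_Icc_succ_top (Nat.le_add_left 1 m) p

lemma partialSum_add_sum_Ioc {m m' : ℕ} (h : m ≤ m') :
    partialSum p m + ∑ j ∈ Ioc m m', p j = partialSum p m' := by
  have hIcc (m : ℕ) : Icc 1 m = Ioc 0 m := Icc_add_one_left_eq_Ioc 0 m
  rw [partialSum, partialSum, hIcc, hIcc]
  exact sum_Ioc_consecutive p (Nat.zero_le m) h

lemma partialSum_mono : Monotone (partialSum p) := fun _ _ h =>
  (partialSum_add_sum_Ioc h).symm ▸ Nat.le_add_right _ _

lemma partialSum_add_mul_le {m m' a : ℕ} (h : m ≤ m') (ha : ∀ j ∈ Ioc m m', a ≤ p j) :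
    partialSum p m + (m' - m) * a ≤ partialSum p m' := by
  rw [← partialSum_add_sum_Ioc h, ← Nat.card_Ioc, ← smul_eq_mul]
  exact Nat.add_le_add_left (card_nsmul_le_sum _ _ _ ha) _

lemma partialSum_le_add_mul {m m' a : ℕ} (h : m ≤ m') (ha : ∀ j ∈ Ioc m m', p j ≤ a) :
    partialSum p m' ≤ partialSum p m + (m' - m) * a := by
  rw [← partialSum_add_sum_Ioc h, ← Nat.card_Ioc, ← smul_eq_mul]
  exact Nat.add_le_add_left (sum_le_card_nsmul _ _ _ ha) _

lemma chiOf_le {k m : ℕ} (hm : 1 ≤ m) (hk : k ≤ partialSum p m) : chiOf p k ≤ m :=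
  Nat.sInf_le ⟨hm, hk⟩

lemma partialSum_lt_of_lt_chiOf {k m : ℕ} (hm : 1 ≤ m) (h : m < chiOf p k) :
    partialSum p m < k :=
  lt_of_not_ge fun hk => (chiOf_le hm hk).not_gt h

lemma chiOf_one (hp : 1 ≤ p 1) : chiOf p 1 = 1 :=
  le_antisymm (chiOf_le le_rfl hp) (Nat.sInf_mem (s := {i | 1 ≤ i ∧ 1 ≤ partialSum p i})
    ⟨1, le_rfl, hp⟩).1

lemma mul_sub_le_mul_sub (hp : AntitoneOn p (Set.Ici 1)) {M m m' c : ℕ} (hMm : M ≤ m)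
    (hm : 1 ≤ m) (hmm' : m ≤ m') (hc : c ≤ partialSum p m') :
    ((m : ℤ) - M) * (c - partialSum p m) ≤ ((m' : ℤ) - m) * (partialSum p m - partialSum p M) := by
  have hlow : partialSum p M + (m - M) * p m ≤ partialSum p m :=
    partialSum_add_mul_le hMm fun j hj => by
      rw [mem_Ioc] at hj
      exact hp (Set.mem_Ici.2 (by omega)) (Set.mem_Ici.2 hm) hj.2
  have hup : partialSum p m' ≤ partialSum p m + (m' - m) * p m :=
    partialSum_le_add_mul hmm' fun j hj => by
      rw [mem_Ioc] at hj
      exact hp (Set.mem_Ici.2 hm) (Set.mem_Ici.2 (by omega)) hj.1.le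
  zify [hMm, hmm'] at hlow hup
  calc ((m : ℤ) - M) * (c - partialSum p m) ≤ ((m : ℤ) - M) * ((m' - m) * p m) :=
        mul_le_mul_of_nonneg_left (by linarith) (by omega)
    _ = ((m' : ℤ) - m) * ((m - M) * p m) := by ring
    _ ≤ ((m' : ℤ) - m) * (partialSum p m - partialSum p M) :=
        mul_le_mul_of_nonneg_left (by linarith) (by omega)

end PartialSum

namespace IsPartitionOf

variable {N : ℕ} {p : ℕ → ℕ} {k : ℕ}

lemma antitoneOn (hp : IsPartitionOf N p) : AntitoneOn p (Set.Ici 1) :=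
  antitoneOn_of_succ_le Set.ordConnected_Ici fun a _ ha _ => hp.1 a ha

lemma partialSum_eq_of_eq_zero (hp : IsPartitionOf N p) {m : ℕ} (h : p (m + 1) = 0) :
    partialSum p m = N := by
  have hm : partialSum p (max m N) = partialSum p m := by
    rw [← partialSum_add_sum_Ioc (le_max_left m N), sum_eq_zero, add_zero]
    intro j hj
    rw [mem_Ioc] at hj
    exact Nat.eq_zero_of_le_zero (h ▸ hp.antitoneOn (Set.mem_Ici.2 (by omega))
      (Set.mem_Ici.2 (by omega)) hj.1)
  have hN : partialSum p (max m N) = N := by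
    rw [← partialSum_add_sum_Ioc (le_max_right m N), sum_eq_zero, add_zero, partialSum, hp.2.1]
    exact fun j hj => hp.2.2 j (mem_Ioc.1 hj).1
  rw [← hm, hN]

lemma chiOf_mem (hp : IsPartitionOf N p) (hk : k ≤ N) :
    chiOf p k ∈ {i | 1 ≤ i ∧ k ≤ partialSum p i} :=
  Nat.sInf_mem ⟨N + 1, Nat.le_add_left 1 N,
    hk.trans (hp.2.1.symm.le.trans (partialSum_mono (Nat.le_succ N)))⟩

lemma one_le_chiOf (hp : IsPartitionOf N p) (hk : k ≤ N) : 1 ≤ chiOf p k :=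
  (hp.chiOf_mem hk).1

lemma le_partialSum_chiOf (hp : IsPartitionOf N p) (hk : k ≤ N) :
    k ≤ partialSum p (chiOf p k) :=
  (hp.chiOf_mem hk).2

lemma chiOf_mono (hp : IsPartitionOf N p) {k' : ℕ} (hkk' : k ≤ k') (hk' : k' ≤ N) :
    chiOf p k ≤ chiOf p k' :=
  chiOf_le (hp.one_le_chiOf hk') (hkk'.trans (hp.le_partialSum_chiOf hk'))

lemma chiOf_succ_le (hp : IsPartitionOf N p) (hk : k + 1 ≤ N) :
    chiOf p (k + 1) ≤ chiOf p k + 1 := by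
  set c := chiOf p k
  have hc : 1 ≤ c ∧ k ≤ partialSum p c := hp.chiOf_mem (by omega)
  rcases lt_or_ge k (partialSum p c) with hlt | hle
  · exact (chiOf_le hc.1 hlt).trans (Nat.le_succ c)
  · have hpc : p (c + 1) ≠ 0 := fun h0 => by
      have := hp.partialSum_eq_of_eq_zero h0
      omega
    exact chiOf_le (by omega) (by rw [partialSum_succ]; omega)

lemma partialSum_chiOf_eq (hp : IsPartitionOf N p) (hk : k ≤ N)
    (h : chiOf p k < chiOf p (k + 1)) : partialSum p (chiOf p k) = k := by
  have hle := hp.le_partialSum_chiOf hk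
  by_contra hne
  exact (chiOf_le (hp.one_le_chiOf hk) (by omega)).not_gt h

/-- At a stationary step the part `p (chiOf p k)` is at least `2`, hence so are all earlier
parts. -/
lemma two_mul_chiOf_le (hp : IsPartitionOf N p) (hk1 : 1 ≤ k) (hk : k + 1 ≤ N)
    (h : chiOf p (k + 1) = chiOf p k) : 2 * chiOf p k ≤ k + 1 := by
  set c := chiOf p k
  have hc : k + 1 ≤ partialSum p c := h ▸ hp.le_partialSum_chiOf hk
  obtain hc1 | hc2 : c = 1 ∨ 2 ≤ c := by
    have := hp.one_le_chiOf (k := k) (by omega)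
    omega
  · omega
  have hlt : partialSum p (c - 1) < k := partialSum_lt_of_lt_chiOf (by omega) (by omega)
  have hpc : 2 ≤ p c := by
    have := partialSum_succ (p := p) (c - 1)
    rw [Nat.sub_add_cancel (by omega)] at this
    omega
  have := partialSum_add_mul_le (p := p) (a := 2) (Nat.zero_le (c - 1)) fun j hj => by
    rw [mem_Ioc] at hj
    exact hpc.trans (hp.antitoneOn (Set.mem_Ici.2 hj.1) (Set.mem_Ici.2 (by omega)) (by omega))
  rw [partialSum_zero] at this
  omega

lemma min_le_partialSum (hp : IsPartitionOf N p) (hp1 : 2 ≤ p 1) {m : ℕ} (hm : 1 ≤ m) :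
    min N (m + 1) ≤ partialSum p m := by
  by_cases hpm : p m = 0
  · have hm2 : 2 ≤ m := by
      by_contra
      obtain rfl : m = 1 := by omega
      omega
    have := hp.partialSum_eq_of_eq_zero (m := m - 1) (by rwa [Nat.sub_add_cancel (by omega)])
    have := partialSum_mono (p := p) (Nat.sub_le m 1)
    omega
  · have := partialSum_add_mul_le (p := p) (a := 1) hm fun j hj => by
      rw [mem_Ioc] at hj
      exact (Nat.one_le_iff_ne_zero.2 hpm).trans
        (hp.antitoneOn (Set.mem_Ici.2 (by omega)) (Set.mem_Ici.2 hm) hj.2)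
    have : partialSum p 1 = p 1 := by simp [partialSum]
    omega

lemma chiOf_le_self (hp : IsPartitionOf N p) (hp1 : 2 ≤ p 1) (hk1 : 1 ≤ k) (hk : k ≤ N) :
    chiOf p k ≤ k :=
  chiOf_le hk1 (by have := hp.min_le_partialSum hp1 hk1; omega)

lemma chiOf_le_pred (hp : IsPartitionOf N p) (hp1 : 2 ≤ p 1) (hk2 : 2 ≤ k) (hk : k ≤ N) :
    chiOf p k ≤ k - 1 :=
  chiOf_le (by omega) (by have := hp.min_le_partialSum hp1 (m := k - 1) (by omega); omega)

lemma sub_chiOf_succ_mul_le (hp : IsPartitionOf N p) (hp1 : 2 ≤ p 1) (hk2 : 2 ≤ k)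
    (hk : k + 1 ≤ N) :
    ((chiOf p k : ℤ) + 1 - chiOf p (k + 1)) * (k - 3) ≤ 2 * ((k : ℤ) - 1 - chiOf p k) := by
  by_cases hst : chiOf p (k + 1) = chiOf p k
  · have := hp.two_mul_chiOf_le (by omega) hk hst
    rw [hst, add_sub_cancel_left, one_mul]
    omega
  · have hsucc : chiOf p (k + 1) = chiOf p k + 1 := by
      have := hp.chiOf_mono (Nat.le_add_right k 1) hk
      have := hp.chiOf_succ_le hk
      omega
    have := hp.chiOf_le_pred hp1 hk2 (by omega)
    rw [hsucc, Nat.cast_succ, sub_self, zero_mul]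
    omega

end IsPartitionOf

section LevelCount

variable (N : ℕ) (X : ℕ → ℕ)

def countLE (w : ℕ) : ℕ := #{k ∈ Icc 1 N | X k ≤ w}

def levelCount (v : ℕ) : ℕ := #{k ∈ Icc 1 N | X k = v}

variable {N X}

lemma countLE_mono : Monotone (countLE N X) := fun _ _ h =>
  card_le_card fun _ hk => by
    rw [mem_filter] at hk ⊢
    exact ⟨hk.1, hk.2.trans h⟩

lemma countLE_le (w : ℕ) : countLE N X w ≤ N :=
  (card_filter_le _ _).trans (by simp)

lemma countLE_succ (w : ℕ) : countLE N X (w + 1) = countLE N X w + levelCount N X (w + 1) := by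
  rw [countLE, countLE, levelCount, ← card_union_of_disjoint
    (disjoint_filter.2 fun _ _ h1 h2 => by omega), ← filter_or]
  congr 1
  exact filter_congr fun _ _ => by omega

lemma countLE_eq_self (hle : ∀ k ∈ Icc 1 N, X k ≤ N) : countLE N X N = N := by
  rw [countLE, filter_true_of_mem hle, Nat.card_Icc, Nat.add_sub_cancel]

lemma countLE_zero (hpos : ∀ k ∈ Icc 1 N, 1 ≤ X k) : countLE N X 0 = 0 :=
  card_eq_zero.2 (filter_eq_empty_iff.2 fun k hk => by
    have := hpos k hk
    omega)

lemma partialSum_levelCount (hpos : ∀ k ∈ Icc 1 N, 1 ≤ X k) (m : ℕ) :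
    partialSum (levelCount N X) m = countLE N X m := by
  induction m with
  | zero => exact (countLE_zero hpos).symm
  | succ m ih => rw [partialSum_succ, ih, countLE_succ]

lemma le_countLE_iff (hmono : MonotoneOn X (Set.Icc 1 N)) {k w : ℕ} (hk : k ∈ Icc 1 N) :
    k ≤ countLE N X w ↔ X k ≤ w := by
  rw [mem_Icc] at hk
  constructor
  · intro hkw
    by_contra! hX
    have : countLE N X w ≤ #(Icc 1 (k - 1)) := card_le_card fun j hj => by
      simp only [mem_filter, mem_Icc] at hj ⊢
      refine ⟨hj.1.1, Nat.le_sub_one_of_lt (lt_of_not_ge fun hkj => ?_)⟩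
      exact (hX.trans_le (hmono hk hj.1 hkj)).not_ge hj.2
    simp only [Nat.card_Icc] at this
    omega
  · intro hX
    calc k = #(Icc 1 k) := by simp
      _ ≤ countLE N X w := card_le_card fun j hj => by
        simp only [mem_filter, mem_Icc] at hj ⊢
        exact ⟨⟨hj.1, hj.2.trans hk.2⟩, (hmono ⟨hj.1, by omega⟩ hk hj.2).trans hX⟩

lemma one_le_countLE (hmono : MonotoneOn X (Set.Icc 1 N)) (hN : 1 ≤ N) {w : ℕ} (h : X 1 ≤ w) :
    1 ≤ countLE N X w :=
  (le_countLE_iff hmono (mem_Icc.2 ⟨le_rfl, hN⟩)).2 h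

lemma apply_countLE_le (hmono : MonotoneOn X (Set.Icc 1 N)) {w : ℕ} (h : 1 ≤ countLE N X w) :
    X (countLE N X w) ≤ w :=
  (le_countLE_iff hmono (mem_Icc.2 ⟨h, countLE_le w⟩)).1 le_rfl

lemma lt_apply_countLE_add_one (hmono : MonotoneOn X (Set.Icc 1 N)) {w : ℕ}
    (h : countLE N X w < N) : w < X (countLE N X w + 1) :=
  lt_of_not_ge fun hw => by
    have := (le_countLE_iff hmono (mem_Icc.2 ⟨Nat.le_add_left 1 _, h⟩)).2 hw
    omega

lemma isPartitionOf_levelCount (hpos : ∀ k ∈ Icc 1 N, 1 ≤ X k)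
    (hle : ∀ k ∈ Icc 1 N, X k ≤ N)
    (hanti : ∀ v, 1 ≤ v → levelCount N X (v + 1) ≤ levelCount N X v) :
    IsPartitionOf N (levelCount N X) :=
  ⟨hanti, (partialSum_levelCount hpos N).trans (countLE_eq_self hle),
    fun v hv => card_eq_zero.2 (filter_eq_empty_iff.2 fun k hk => by
      have := hle k hk
      omega)⟩

lemma chiOf_levelCount (hmono : MonotoneOn X (Set.Icc 1 N)) (hpos : ∀ k ∈ Icc 1 N, 1 ≤ X k)
    {k : ℕ} (hk : k ∈ Icc 1 N) : chiOf (levelCount N X) k = X k := by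
  have hset : {i | 1 ≤ i ∧ k ≤ partialSum (levelCount N X) i} = Set.Ici (X k) := by
    ext i
    simp only [Set.mem_ofPred_eq, Set.mem_Ici, partialSum_levelCount hpos, le_countLE_iff hmono hk]
    exact ⟨And.right, fun h => ⟨(hpos k hk).trans h, h⟩⟩
  exact (congrArg sInf hset).trans csInf_Ici

end LevelCount

section Nodal

variable {N n : ℕ} {p : Fin n → ℕ → ℕ} {k : ℕ}

noncomputable def nodalSum (n : ℕ) (p : Fin n → ℕ → ℕ) (k : ℕ) : ℤ :=
  ∑ i, (chiOf (p i) k : ℤ) - ((n : ℤ) - 1) * k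

noncomputable def nodalSeq (n : ℕ) (p : Fin n → ℕ → ℕ) (k : ℕ) : ℕ := max 1 (nodalSum n p k).toNat

lemma natCast_nodalSeq (k : ℕ) : (nodalSeq n p k : ℤ) = max 1 (nodalSum n p k) := by
  rw [nodalSeq]
  omega

lemma nodalSum_one (hp1 : ∀ i, 1 ≤ p i 1) : nodalSum n p 1 = 1 := by
  simp [nodalSum, chiOf_one (hp1 _)]

lemma nodalSum_le_self (hp : ∀ i, IsPartitionOf N (p i)) (hp1 : ∀ i, 2 ≤ p i 1) (hk1 : 1 ≤ k)
    (hk : k ≤ N) : nodalSum n p k ≤ k := by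
  have : ∑ i, (chiOf (p i) k : ℤ) ≤ ∑ _i : Fin n, (k : ℤ) := sum_le_sum fun i _ => by
    exact_mod_cast (hp i).chiOf_le_self (hp1 i) hk1 hk
  simp only [sum_const, card_univ, Fintype.card_fin, nsmul_eq_mul] at this
  rw [nodalSum]
  linarith

lemma nodalSum_succ_le (hp : ∀ i, IsPartitionOf N (p i)) (hk : k + 1 ≤ N) :
    nodalSum n p (k + 1) ≤ nodalSum n p k + 1 := by
  have : ∑ i, (chiOf (p i) (k + 1) : ℤ) ≤ ∑ i, ((chiOf (p i) k : ℤ) + 1) := sum_le_sum fun i _ => by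
    exact_mod_cast (hp i).chiOf_succ_le hk
  simp only [sum_add_distrib, sum_const, card_univ, Fintype.card_fin, nsmul_eq_mul,
    mul_one] at this
  rw [nodalSum, nodalSum]
  push_cast
  linarith

lemma chiOf_succ_eq_of_nodalSum_succ (hp : ∀ i, IsPartitionOf N (p i)) (hk : k + 1 ≤ N)
    (h : nodalSum n p (k + 1) = nodalSum n p k + 1) (i : Fin n) :
    chiOf (p i) (k + 1) = chiOf (p i) k + 1 := by
  have hle (j : Fin n) : (chiOf (p j) (k + 1) : ℤ) - chiOf (p j) k - 1 ≤ 0 := by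
    have := (hp j).chiOf_succ_le hk
    omega
  have hsum : ∑ j, ((chiOf (p j) (k + 1) : ℤ) - chiOf (p j) k - 1) = 0 := by
    simp only [sum_sub_distrib, sum_const, card_univ, Fintype.card_fin, nsmul_eq_mul, mul_one]
    rw [nodalSum, nodalSum] at h
    push_cast at h
    linarith
  have := (sum_eq_zero_iff_of_nonpos fun j _ => hle j).1 hsum i (mem_univ i)
  omega

/-- A stationary index `i` (one with `chiOf (p i) (k + 1) = chiOf (p i) k`) falls short of the
bound `chiOf (p i) k ≤ k - 1` by at least `(k - 3) / 2`, whereas `2 ≤ nodalSum n p k` leaves a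
total shortfall of at most `k - n - 2`: so at most one index is stationary. -/
lemma nodalSum_le_succ (hp : ∀ i, IsPartitionOf N (p i)) (hp1 : ∀ i, 2 ≤ p i 1) (hk1 : 1 ≤ k)
    (hk : k + 1 ≤ N) (hF : 2 ≤ nodalSum n p k) : nodalSum n p k ≤ nodalSum n p (k + 1) := by
  have hk2 : 2 ≤ k := by
    by_contra
    obtain rfl : k = 1 := by omega
    rw [nodalSum_one fun i => (hp1 i).trans' one_le_two] at hF
    omega
  have hmono : ∑ i, (chiOf (p i) k : ℤ) ≤ ∑ i, (chiOf (p i) (k + 1) : ℤ) :=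
    sum_le_sum fun i _ => by exact_mod_cast (hp i).chiOf_mono (Nat.le_add_right k 1) hk
  have hpred : ∑ i, (chiOf (p i) k : ℤ) ≤ ∑ _i : Fin n, ((k : ℤ) - 1) :=
    sum_le_sum fun i _ => by
      have := (hp i).chiOf_le_pred (hp1 i) hk2 (by omega)
      omega
  have hshort : ∑ i, ((chiOf (p i) k : ℤ) + 1 - chiOf (p i) (k + 1)) * (k - 3) ≤
      ∑ i, 2 * ((k : ℤ) - 1 - chiOf (p i) k) :=
    sum_le_sum fun i _ => (hp i).sub_chiOf_succ_mul_le (hp1 i) hk2 hk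
  simp only [← sum_mul, ← mul_sum, sum_sub_distrib, sum_add_distrib, sum_const, card_univ,
    Fintype.card_fin, nsmul_eq_mul, mul_one] at hpred hshort
  rw [nodalSum] at hF
  rw [nodalSum, nodalSum]
  push_cast
  by_contra!
  nlinarith

lemma nodalSeq_one (hp1 : ∀ i, 1 ≤ p i 1) : nodalSeq n p 1 = 1 := by
  simp [nodalSeq, nodalSum_one hp1]

lemma nodalSeq_le_self (hp : ∀ i, IsPartitionOf N (p i)) (hp1 : ∀ i, 2 ≤ p i 1)
    (hk1 : 1 ≤ k) (hk : k ≤ N) : nodalSeq n p k ≤ k := by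
  have := nodalSum_le_self hp hp1 hk1 hk
  have := natCast_nodalSeq (p := p) k
  omega

lemma nodalSeq_monotoneOn (hp : ∀ i, IsPartitionOf N (p i)) (hp1 : ∀ i, 2 ≤ p i 1) :
    MonotoneOn (nodalSeq n p) (Set.Icc 1 N) :=
  monotoneOn_of_le_succ Set.ordConnected_Icc fun k _ hk hk' => by
    rw [Order.succ_eq_add_one] at hk' ⊢
    have h1 := natCast_nodalSeq (p := p) k
    have h2 := natCast_nodalSeq (p := p) (k + 1)
    rcases le_or_gt 2 (nodalSum n p k) with hF | hF
    · have := nodalSum_le_succ hp hp1 hk.1 hk'.2 hF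
      omega
    · omega

lemma nodalSum_countLE (hp : ∀ i, IsPartitionOf N (p i)) (hp1 : ∀ i, 2 ≤ p i 1) {w : ℕ}
    (hw : 1 ≤ w) (hN : countLE N (nodalSeq n p) w < N) :
    nodalSum n p (countLE N (nodalSeq n p) w) = w ∧
      ∀ i, partialSum (p i) (chiOf (p i) (countLE N (nodalSeq n p) w)) =
        countLE N (nodalSeq n p) w := by
  set K := countLE N (nodalSeq n p) w
  have hmono := nodalSeq_monotoneOn hp hp1
  have hK := one_le_countLE hmono (by omega)
    ((nodalSeq_one fun i => (hp1 i).trans' one_le_two).trans_le hw)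
  have hXK : nodalSeq n p K ≤ w := apply_countLE_le hmono hK
  have hXK1 : w < nodalSeq n p (K + 1) := lt_apply_countLE_add_one hmono hN
  have h1 := natCast_nodalSeq (p := p) K
  have h2 := natCast_nodalSeq (p := p) (K + 1)
  have h3 := nodalSum_succ_le hp (k := K) hN
  have hF : nodalSum n p (K + 1) = nodalSum n p K + 1 ∧ nodalSum n p K = w := by omega
  refine ⟨hF.2, fun i => (hp i).partialSum_chiOf_eq hN.le ?_⟩
  rw [chiOf_succ_eq_of_nodalSum_succ hp hN hF.1]
  omega

lemma exists_partialSum_eq_countLE_sub_one (hp : ∀ i, IsPartitionOf N (p i))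
    (hp1 : ∀ i, 2 ≤ p i 1) {v K : ℕ} (hv : 1 ≤ v) (hK : countLE N (nodalSeq n p) (v - 1) ≤ K)
    (hKN : K < N) :
    ∃ M : Fin n → ℕ, (∀ i, partialSum (p i) (M i) = countLE N (nodalSeq n p) (v - 1) ∧
        M i ≤ chiOf (p i) K) ∧
      ∑ i, (M i : ℤ) = (v : ℤ) - 1 + ((n : ℤ) - 1) * countLE N (nodalSeq n p) (v - 1) := by
  obtain rfl | hv2 := hv.eq_or_lt
  · have hA : countLE N (nodalSeq n p) 0 = 0 := countLE_zero fun k _ => le_max_left _ _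
    exact ⟨0, fun i => ⟨hA.symm ▸ partialSum_zero, Nat.zero_le _⟩, by simp [hA]⟩
  obtain ⟨hF, hS⟩ := nodalSum_countLE hp hp1 (w := v - 1) (by omega) (by omega)
  refine ⟨fun i => chiOf (p i) (countLE N (nodalSeq n p) (v - 1)),
    fun i => ⟨hS i, (hp i).chiOf_mono hK hKN.le⟩, ?_⟩
  rw [nodalSum] at hF
  push_cast [Nat.cast_sub hv] at hF ⊢
  linarith

lemma levelCount_nodalSeq_succ_le (hp : ∀ i, IsPartitionOf N (p i)) (hp1 : ∀ i, 2 ≤ p i 1)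
    {v : ℕ} (hv : 1 ≤ v) :
    levelCount N (nodalSeq n p) (v + 1) ≤ levelCount N (nodalSeq n p) v := by
  set A := countLE N (nodalSeq n p) (v - 1)
  set B := countLE N (nodalSeq n p) v
  set C := countLE N (nodalSeq n p) (v + 1)
  have hAB : B = A + levelCount N (nodalSeq n p) v := by
    simpa only [Nat.sub_add_cancel hv] using countLE_succ (N := N) (X := nodalSeq n p) (v - 1)
  have hBC : C = B + levelCount N (nodalSeq n p) (v + 1) := countLE_succ v
  obtain hBC' | hBC' := (countLE_mono (Nat.le_succ v) : B ≤ C).eq_or_lt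
  · omega
  have hCN : C ≤ N := countLE_le _
  obtain ⟨hFB, hSB⟩ := nodalSum_countLE hp hp1 hv (by omega)
  obtain ⟨M, hM, hMsum⟩ := exists_partialSum_eq_countLE_sub_one hp hp1 hv (K := B) (by omega)
    (by omega)
  have hFC : nodalSum n p C ≤ v + 1 := by
    have : nodalSeq n p C ≤ v + 1 := apply_countLE_le (nodalSeq_monotoneOn hp hp1) (by omega)
    have := natCast_nodalSeq (p := p) C
    omega
  have key (i : Fin n) : ((chiOf (p i) B : ℤ) - M i) * (C - B) ≤
      ((chiOf (p i) C : ℤ) - chiOf (p i) B) * (B - A) := by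
    have := mul_sub_le_mul_sub (hp i).antitoneOn (hM i).2 ((hp i).one_le_chiOf (by omega))
      ((hp i).chiOf_mono hBC'.le hCN) ((hp i).le_partialSum_chiOf hCN)
    rwa [hSB i, (hM i).1] at this
  have hsum := sum_le_sum fun i (_ : i ∈ univ) => key i
  rw [← sum_mul, ← sum_mul, sum_sub_distrib, sum_sub_distrib] at hsum
  rw [nodalSum] at hFB hFC
  have hBA : (0 : ℤ) ≤ B - A := by omega
  have e1 : ∑ i, (chiOf (p i) B : ℤ) - ∑ i, (M i : ℤ) = 1 + ((n : ℤ) - 1) * (B - A) := by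
    linarith
  have e2 : ∑ i, (chiOf (p i) C : ℤ) - ∑ i, (chiOf (p i) B : ℤ) ≤
      1 + ((n : ℤ) - 1) * (C - B) := by
    linarith
  rw [e1] at hsum
  have : (C : ℤ) - B ≤ B - A := by nlinarith [mul_le_mul_of_nonneg_right e2 hBA]
  omega

end Nodal

theorem nodal_sequence_is_vanishing_order_general
    (N n : ℕ)
    (p χ : Fin n → ℕ → ℕ)
    (h : ∀ i, IsVanishingOrderSeq N (p i) (χ i) ∧ 2 ≤ p i 1) :
    ∃ q : ℕ → ℕ, IsPartitionOf N q ∧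
      ∀ k, 1 ≤ k → k ≤ N →
        (chiOf q k : ℤ) = max 1 ((∑ i, (χ i k : ℤ)) - ((n : ℤ) - 1) * (k : ℤ)) := by
  have hp i := (h i).1.1
  have hp1 i := (h i).2
  have hpos : ∀ k ∈ Icc 1 N, 1 ≤ nodalSeq n p k := fun k _ => le_max_left _ _
  have hle : ∀ k ∈ Icc 1 N, nodalSeq n p k ≤ N := fun k hk => by
    obtain ⟨hk1, hkN⟩ := mem_Icc.1 hk
    exact (nodalSeq_le_self hp hp1 hk1 hkN).trans hkN
  refine ⟨levelCount N (nodalSeq n p),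
    isPartitionOf_levelCount hpos hle fun v hv => levelCount_nodalSeq_succ_le hp hp1 hv,
    fun k hk1 hkN => ?_⟩
  rw [chiOf_levelCount (nodalSeq_monotoneOn hp hp1) hpos (mem_Icc.2 ⟨hk1, hkN⟩),
    natCast_nodalSeq, nodalSum]
  simp only [(h _).1.2 k hk1 hkN]

/-- for `n` nonzero partitions of `N`, the nodal sequence
`max(1, ∑ᵢ χ⁽ⁱ⁾_k − (n−1)k)` is the vanishing-order sequence of some partition of `N`. -/
theorem nodal_sequence_is_vanishing_order
    (N n : ℕ) (hN : 2 ≤ N) (hn : 1 ≤ n)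
    (p χ : Fin n → ℕ → ℕ)
    (h : ∀ i, IsVanishingOrderSeq N (p i) (χ i) ∧ 2 ≤ p i 1) :
    ∃ q : ℕ → ℕ, IsPartitionOf N q ∧
      ∀ k, 1 ≤ k → k ≤ N →
        (chiOf q k : ℤ) = max 1 ((∑ i, (χ i k : ℤ)) - ((n : ℤ) - 1) * (k : ℤ)) :=
  nodal_sequence_is_vanishing_order_general N n p χ h
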